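/- arXiv:1307.6551 — 4 statements merged into one kernel-verified Lean document; each statement's English description precedes it below -/
import Mathlib

section
/- Let E ⊆ ℝⁿ be a measurable set of positive measure such that for almost every (n+1)-tuple (x₁,…,x_{n+1}) ∈ E^{n+1}, the convex hull of {x₁,…,x_{n+1}} is contained in E up to an n-dimensional null set. Then the convex hull of the set of Lebesgue density points of E is open and differs from E by a null set. -/
/-!
Let `D` be the set of density points of `E`. By Lebesgue's density theorem `D =ᵐ E`, so it
suffices to show that `D` is open and convex. For `a, b ∈ D` and small `r`, `E` has positive
measure in every ball of radius `r / 8` centred within `r / 2` of `a` or of `b`. Near each of the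
`2 ^ (n + 1)` vertices of the cubes of radius `r / 2` about `a` and `b` pick a point of `E`,
generically enough that the hull of any `n + 1` of them lies in `E` up to a null set; by
Carathéodory the hull of all of them does too. That hull is `r / 8`-close to the hull of the two
cubes, so by a separation argument it contains the `r / 8`-neighbourhood of the segment `[a, b]`,
which therefore consists of density points of `E`.
-/

open MeasureTheory Set Filter
open scoped ENNReal Topology

/-- The set of Lebesgue density points of `E`: points where `E` has density 1. -/
def densityPoints {n : ℕ} (E : Set (Fin n → ℝ)) : Set (Fin n → ℝ) :=
  {x | Tendsto (fun r : ℝ => volume (E ∩ Metric.ball x r) / volume (Metric.ball x r))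
      (𝓝[>] 0) (𝓝 1)}

open Function Metric
open scoped Pointwise

theorem StrongDual.exists_norm_le_one_and_half_norm_le {W : Type*} [NormedAddCommGroup W]
    [NormedSpace ℝ W] (f : StrongDual ℝ W) : ∃ v : W, ‖v‖ ≤ 1 ∧ ‖f‖ / 2 ≤ f v := by
  rcases eq_or_ne f 0 with rfl | hf
  · exact ⟨0, by simp⟩
  obtain ⟨v, hv, hfv⟩ := f.exists_lt_apply_of_lt_opNorm (half_lt_self (norm_pos_iff.mpr hf))
  rw [Real.norm_eq_abs] at hfv
  rcases le_total 0 (f v) with h | h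
  · exact ⟨v, hv.le, by rw [abs_of_nonneg h] at hfv; exact hfv.le⟩
  · exact ⟨-v, by simpa using hv.le, by rw [abs_of_nonpos h] at hfv; simpa using hfv.le⟩

theorem Convex.ball_subset_of_ball_subset_add_closedBall {W : Type*} [NormedAddCommGroup W]
    [NormedSpace ℝ W] {K : Set W} (hK : Convex ℝ K) (hKc : IsClosed K) {z : W} {ε δ : ℝ}
    (hδ : 0 ≤ δ) (h : ball z ε ⊆ K + closedBall (0 : W) δ) : ball z (ε - 3 * δ) ⊆ K := by
  intro w hw
  by_contra hwK
  obtain ⟨f, u, hfK, hfw⟩ := geometric_hahn_banach_closed_point hK hKc hwK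
  obtain ⟨v, hv, hfv⟩ := f.exists_norm_le_one_and_half_norm_le
  -- `w + 2δ • v` stays in `ball z ε`, yet `f` there exceeds its supremum on `K + closedBall 0 δ`.
  have hq : w + (2 * δ) • v ∈ ball z ε := by
    rw [mem_ball] at hw ⊢
    calc dist (w + (2 * δ) • v) z ≤ ‖(2 * δ) • v‖ + dist w z := by
          rw [dist_eq_norm, dist_eq_norm, add_sub_right_comm, add_comm (w - z)]
          exact norm_add_le _ _
      _ ≤ 2 * δ * 1 + dist w z := by
          rw [norm_smul, Real.norm_of_nonneg (by positivity)]; gcongr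
      _ < ε := by linarith
  obtain ⟨k, hk, y, hy, hq_eq⟩ := Set.mem_add.mp (h hq)
  have hfy : f y ≤ ‖f‖ * δ :=
    (le_abs_self _).trans ((f.le_opNorm y).trans (by gcongr; simpa using hy))
  have hfq : f k + f y = f w + 2 * δ * f v := by
    simpa using congrArg f hq_eq
  nlinarith [hfK k hk, norm_nonneg f]

theorem quasiMeasurePreserving_comp_of_injective {κ ι α : Type*} [Fintype κ] [Fintype ι]
    [MeasureSpace α] [SigmaFinite (volume : Measure α)] {f : κ → ι} (hf : Injective f) :
    Measure.QuasiMeasurePreserving (fun x : ι → α => x ∘ f) volume volume := by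
  classical
  -- Not `range f`: as a type it would carry `fintypeRange` rather than `Subtype.fintype`.
  let e : κ ≃ {i // ∃ k, f k = i} := Equiv.ofInjective f hf
  have hrestrict := (Measure.quasiMeasurePreserving_fst (μ := volume) (ν := volume)).comp
    (volume_preserving_piEquivPiSubtypeProd (fun _ : ι => α)
      (fun i => ∃ k, f k = i)).quasiMeasurePreserving
  exact ((volume_measurePreserving_piCongrLeft (fun _ => α) e).symm).quasiMeasurePreserving.comp
    hrestrict

theorem convexHull_range_subset_iUnion_embedding {V ι : Type*} [AddCommGroup V] [Module ℝ V]
    [FiniteDimensional ℝ V] [Fintype ι] (x : ι → V) {m : ℕ} (hm : Module.finrank ℝ V + 1 ≤ m)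
    (hι : m ≤ Fintype.card ι) :
    convexHull ℝ (range x) ⊆ ⋃ f : Fin m ↪ ι, convexHull ℝ (range (x ∘ f)) := by
  classical
  intro w hw
  rw [convexHull_eq_union] at hw
  simp only [mem_iUnion] at hw ⊢
  obtain ⟨t, hts, hti, hwt⟩ := hw
  have htm : t.card ≤ m := by
    have h1 := hti.card_le_finrank_succ
    have h2 := Submodule.finrank_le (vectorSpan ℝ (range ((↑) : t → V)))
    rw [Fintype.card_coe] at h1
    omega
  have : Nonempty ι := Fintype.card_pos_iff.mp (by omega)
  obtain ⟨u, htu, -, hu⟩ := Finset.exists_subsuperset_card_eq (Finset.subset_univ _)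
    (Finset.card_image_le.trans htm) (by simpa using hι)
  let g : Fin m ≃ u := (Fintype.equivFinOfCardEq (by simpa using hu)).symm
  refine ⟨g.toEmbedding.trans (Embedding.subtype _), convexHull_mono ?_ hwt⟩
  intro y hy
  obtain ⟨i, rfl⟩ := hts hy
  obtain ⟨j, hj⟩ := g.surjective ⟨invFun x (x i), htu (Finset.mem_image_of_mem _ hy)⟩
  exact ⟨j, by simp [hj, invFun_eq ⟨i, rfl⟩]⟩

def HullsAESubset {V : Type*} [AddCommGroup V] [Module ℝ V] [MeasureSpace V] (ι : Type*)
    [Fintype ι] (E : Set V) : Prop :=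
  ∀ᵐ x : ι → V, (∀ i, x i ∈ E) → convexHull ℝ (range x) ≤ᵐ[volume] E

theorem HullsAESubset.of_card_le {V : Type*} [AddCommGroup V] [Module ℝ V]
    [FiniteDimensional ℝ V] [MeasureSpace V] [SigmaFinite (volume : Measure V)] {E : Set V}
    {m : ℕ} (hE : HullsAESubset (Fin m) E) (hm : Module.finrank ℝ V + 1 ≤ m) {ι : Type*}
    [Fintype ι] (hι : m ≤ Fintype.card ι) : HullsAESubset ι E := by
  have hsub : ∀ f : Fin m ↪ ι, ∀ᵐ x : ι → V,
      (∀ i, x (f i) ∈ E) → convexHull ℝ (range (x ∘ f)) ≤ᵐ[volume] E :=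
    fun f => (quasiMeasurePreserving_comp_of_injective f.injective).ae hE
  filter_upwards [ae_all_iff.mpr hsub] with x hx hxE
  rw [ae_le_set]
  refine measure_mono_null
    (sdiff_subset_sdiff_left (convexHull_range_subset_iUnion_embedding x hm hι)) ?_
  rw [iUnion_sdiff, measure_iUnion_null_iff]
  exact fun f => ae_le_set.mp (hx f fun i => hxE (f i))

theorem addHaar_closedBall_ae_eq_ball {V : Type*} [NormedAddCommGroup V] [NormedSpace ℝ V]
    [MeasurableSpace V] [BorelSpace V] [FiniteDimensional ℝ V] (μ : Measure V)
    [μ.IsAddHaarMeasure] (x : V) {r : ℝ} (hr : r ≠ 0) : closedBall x r =ᵐ[μ] ball x r := by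
  rw [← closedBall_sdiff_sphere]
  exact (sdiff_null_ae_eq_self (Measure.addHaar_sphere_of_ne_zero μ x hr)).symm

section

variable {n : ℕ} {E : Set (Fin n → ℝ)}

theorem subset_densityPoints_of_isOpen {U : Set (Fin n → ℝ)} (hU : IsOpen U)
    (hUE : U ≤ᵐ[volume] E) : U ⊆ densityPoints E := by
  intro x hx
  obtain ⟨r, hr, hball⟩ := Metric.isOpen_iff.mp hU x hx
  refine tendsto_const_nhds.congr' ?_
  filter_upwards [Ioo_mem_nhdsGT hr] with ρ hρ
  have hρE : ball x ρ ≤ᵐ[volume] E :=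
    (LE.le.eventuallyLE ((ball_subset_ball hρ.2.le).trans hball)).trans hUE
  have hinter : (E ∩ ball x ρ : Set (Fin n → ℝ)) =ᵐ[volume] ball x ρ :=
    ae_eq_set.mpr ⟨by rw [sdiff_eq_empty.mpr inter_subset_right, measure_empty],
      by rw [sdiff_inter_self_eq_sdiff]; exact ae_le_set.mp hρE⟩
  rw [measure_congr hinter, ENNReal.div_self (measure_ball_pos volume x hρ.1).ne'
    measure_ball_lt_top.ne]

theorem densityPoints_ae_eq (hE : MeasurableSet E) :
    densityPoints E =ᵐ[volume] E := by
  filter_upwards [Besicovitch.ae_tendsto_measure_inter_div_of_measurableSet volume hE] with x hx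
  have hball : Tendsto (fun r : ℝ => volume (E ∩ ball x r) / volume (ball x r)) (𝓝[>] 0)
      (𝓝 (E.indicator 1 x)) := by
    refine hx.congr' ?_
    filter_upwards [self_mem_nhdsWithin] with r (hr : 0 < r)
    have hr' := addHaar_closedBall_ae_eq_ball volume x hr.ne'
    rw [measure_congr hr', measure_congr (EventuallyEq.rfl.inter hr')]
  rw [eq_iff_iff]
  by_cases hxE : x ∈ E
  · rw [indicator_of_mem hxE, Pi.one_apply] at hball
    exact iff_of_true hball hxE
  · rw [indicator_of_notMem hxE] at hball
    exact iff_of_false (fun h => zero_ne_one (tendsto_nhds_unique hball h)) hxE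

theorem eventually_measure_inter_ball_pos {d : Fin n → ℝ} (hd : d ∈ densityPoints E) :
    ∀ᶠ r in 𝓝[>] 0, ∀ y ∈ closedBall d (r / 2), 0 < volume (E ∩ ball y (r / 8)) := by
  set c : ℝ≥0∞ := ENNReal.ofReal ((1 / 8) ^ n)
  have hc : 1 - c < 1 :=
    ENNReal.sub_lt_self ENNReal.one_ne_top one_ne_zero (ENNReal.ofReal_pos.mpr (by positivity)).ne'
  filter_upwards [hd.eventually (lt_mem_nhds hc), self_mem_nhdsWithin] with r hr (hr0 : 0 < r) y hy
  rw [pos_iff_ne_zero]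
  intro h0
  have hsub : ball y (r / 8) ⊆ ball d r :=
    ball_subset_ball' (by rw [mem_closedBall] at hy; linarith)
  have hvol : volume (ball y (r / 8)) = c * volume (ball d r) := by
    rw [Real.volume_pi_ball y (by positivity), Real.volume_pi_ball d hr0, Fintype.card_fin,
      ← ENNReal.ofReal_mul (by positivity), ← mul_pow]
    ring_nf
  have hB : volume (ball d r) ≠ 0 := (measure_ball_pos volume d hr0).ne'
  -- A null `E ∩ ball y (r / 8)` would cap the density of `E` in `ball d r` at `1 - 8⁻ⁿ`.
  refine hr.not_ge ?_
  calc volume (E ∩ ball d r) / volume (ball d r)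
      ≤ volume (ball d r \ ball y (r / 8)) / volume (ball d r) := by
        refine ENNReal.div_le_div_right
          ((measure_sdiff_null h0).symm.trans_le (measure_mono ?_)) _
        rintro v ⟨⟨hvE, hvB⟩, hvb⟩
        exact ⟨hvB, fun h => hvb ⟨hvE, h⟩⟩
    _ = 1 - c := by
        rw [measure_sdiff hsub measurableSet_ball.nullMeasurableSet measure_ball_lt_top.ne, hvol,
          ENNReal.sub_div (fun _ _ => hB), ENNReal.div_self hB measure_ball_lt_top.ne,
          ENNReal.mul_div_cancel_right hB measure_ball_lt_top.ne]

def cubeVertex (c : Fin n → ℝ) (ρ : ℝ) (s : Fin n → Bool) : Fin n → ℝ :=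
  fun i => bif s i then c i + ρ else c i - ρ

theorem convexHull_range_cubeVertex (c : Fin n → ℝ) {ρ : ℝ} (hρ : 0 ≤ ρ) :
    convexHull ℝ (range (cubeVertex c ρ)) = closedBall c ρ := by
  have hrange (i : Fin n) :
      range (fun b : Bool => bif b then c i + ρ else c i - ρ) = {c i - ρ, c i + ρ} := by
    ext; simp [or_comm]
  change convexHull ℝ (range (Pi.map fun i (b : Bool) => bif b then c i + ρ else c i - ρ)) = _
  rw [range_piMap, convexHull_pi, closedBall_pi _ hρ]
  refine congrArg (pi univ) (funext fun i => ?_)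
  rw [hrange, convexHull_pair, segment_eq_Icc (by linarith), Real.closedBall_eq_Icc]

theorem ball_subset_convexHull_union_of_mem_segment {W : Type*} [NormedAddCommGroup W]
    [NormedSpace ℝ W] {a b z : W} (hz : z ∈ segment ℝ a b) (ρ : ℝ) :
    ball z ρ ⊆ convexHull ℝ (closedBall a ρ ∪ closedBall b ρ) := by
  obtain ⟨s, t, hs, ht, hst, rfl⟩ := hz
  intro w hw
  have hshift (c : W) : c + (w - (s • a + t • b)) ∈ closedBall c ρ := by
    simpa [dist_eq_norm] using (mem_ball.mp hw).le
  convert convex_convexHull ℝ (closedBall a ρ ∪ closedBall b ρ)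
    (subset_convexHull ℝ _ (mem_union_left _ (hshift a)))
    (subset_convexHull ℝ _ (mem_union_right _ (hshift b))) hs ht hst using 1
  rw [smul_add, smul_add, add_add_add_comm, ← add_smul, hst, one_smul, add_sub_cancel]

theorem ball_subset_densityPoints_of_ball_subset_convexHull (hE : HullsAESubset (Fin (n + 1)) E)
    {ι : Type*} [Fintype ι] (hι : n + 1 ≤ Fintype.card ι)
    {p : ι → Fin n → ℝ} {z : Fin n → ℝ} {ε δ : ℝ} (hδ : 0 ≤ δ)
    (hp : ∀ j, 0 < volume (E ∩ ball (p j) δ)) (hz : ball z ε ⊆ convexHull ℝ (range p)) :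
    ball z (ε - 3 * δ) ⊆ densityPoints E := by
  have hae := hE.of_card_le (by simp) hι
  have hpi : volume (univ.pi fun j => E ∩ ball (p j) δ) ≠ 0 := by
    rw [volume_pi_pi]
    exact Finset.prod_ne_zero_iff.mpr fun j _ => (hp j).ne'
  obtain ⟨x, hx, hxE⟩ := Measure.exists_mem_of_measure_ne_zero_of_ae hpi (ae_restrict_of_ae hae)
  have hpx : convexHull ℝ (range p) ⊆ convexHull ℝ (range x) + closedBall 0 δ := by
    refine convexHull_min ?_ ((convex_convexHull ℝ _).add (convex_closedBall 0 δ))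
    rintro _ ⟨j, rfl⟩
    refine ⟨x j, subset_convexHull ℝ _ (mem_range_self j), p j - x j, ?_, add_sub_cancel _ _⟩
    simpa [dist_eq_norm'] using (hx j (mem_univ j)).2.le
  have hball := (convex_convexHull ℝ _).ball_subset_of_ball_subset_add_closedBall
    ((finite_range x).isCompact_convexHull ℝ).isClosed hδ (hz.trans hpx)
  exact subset_densityPoints_of_isOpen isOpen_ball
    ((LE.le.eventuallyLE hball).trans (hxE fun j => (hx j (mem_univ j)).1))

theorem exists_ball_subset_densityPoints_of_mem_segment (hE : HullsAESubset (Fin (n + 1)) E)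
    {a b : Fin n → ℝ} (ha : a ∈ densityPoints E) (hb : b ∈ densityPoints E) :
    ∃ r > 0, ∀ z ∈ segment ℝ a b, ball z r ⊆ densityPoints E := by
  obtain ⟨r, ⟨hra, hrb⟩, hr0 : 0 < r⟩ := (((eventually_measure_inter_ball_pos ha).and
    (eventually_measure_inter_ball_pos hb)).and self_mem_nhdsWithin).exists
  let p : Bool × (Fin n → Bool) → Fin n → ℝ := fun v => cubeVertex (cond v.1 a b) (r / 2) v.2
  have hcube (c : Bool) : closedBall (cond c a b) (r / 2) ⊆ convexHull ℝ (range p) := by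
    rw [← convexHull_range_cubeVertex _ (by positivity)]
    exact convexHull_mono (by rintro _ ⟨s, rfl⟩; exact ⟨(c, s), rfl⟩)
  have hp (v : Bool × (Fin n → Bool)) : 0 < volume (E ∩ ball (p v) (r / 8)) := by
    have hv : p v ∈ closedBall (cond v.1 a b) (r / 2) := by
      rw [← convexHull_range_cubeVertex _ (by positivity)]
      exact subset_convexHull ℝ _ (mem_range_self v.2)
    cases h : v.1 <;> rw [h] at hv
    exacts [hrb _ hv, hra _ hv]
  have hcard : n + 1 ≤ Fintype.card (Bool × (Fin n → Bool)) := by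
    simp only [Fintype.card_prod, Fintype.card_bool, Fintype.card_fun, Fintype.card_fin]
    have := Nat.lt_two_pow_self (n := n)
    omega
  refine ⟨r / 8, by positivity, fun z hz => ?_⟩
  have := ball_subset_densityPoints_of_ball_subset_convexHull hE hcard (by positivity) hp
    ((ball_subset_convexHull_union_of_mem_segment hz _).trans
      (convexHull_min (union_subset (hcube true) (hcube false)) (convex_convexHull ℝ _)))
  rwa [show r / 2 - 3 * (r / 8) = r / 8 by ring] at this

theorem HullsAESubset.isOpen_densityPoints (hE : HullsAESubset (Fin (n + 1)) E) :
    IsOpen (densityPoints E) :=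
  Metric.isOpen_iff.mpr fun a ha => by
    obtain ⟨r, hr, h⟩ := exists_ball_subset_densityPoints_of_mem_segment hE ha ha
    exact ⟨r, hr, h a (left_mem_segment ℝ a a)⟩

theorem HullsAESubset.convex_densityPoints (hE : HullsAESubset (Fin (n + 1)) E) :
    Convex ℝ (densityPoints E) :=
  convex_iff_segment_subset.mpr fun a ha b hb z hz => by
    obtain ⟨r, hr, h⟩ := exists_ball_subset_densityPoints_of_mem_segment hE ha hb
    exact h z hz (mem_ball_self hr)

end

theorem convexHull_densityPoints_of_ae_hulls_general {n : ℕ} (E : Set (Fin n → ℝ))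
    (hE : MeasurableSet E)
    (hhull : volume {x : Fin (n + 1) → (Fin n → ℝ) |
        (∀ i, x i ∈ E) ∧ volume (convexHull ℝ (Set.range x) \ E) ≠ 0} = 0) :
    IsOpen (convexHull ℝ (densityPoints E)) ∧
      volume (symmDiff (convexHull ℝ (densityPoints E)) E) = 0 := by
  have hconv : HullsAESubset (Fin (n + 1)) E := ae_iff.mpr (by simpa [ae_le_set] using hhull)
  rw [hconv.convex_densityPoints.convexHull_eq]
  exact ⟨hconv.isOpen_densityPoints, measure_symmDiff_eq_zero_iff.mpr (densityPoints_ae_eq hE)⟩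

/-- If `E` has positive measure and for almost every `(n+1)`-tuple of points of `E`
the convex hull of the tuple is contained in `E` up to a null set, then the convex
hull of the set of Lebesgue density points of `E` is open and differs from `E`
by a null set. -/
theorem convexHull_densityPoints_of_ae_hulls {n : ℕ} (E : Set (Fin n → ℝ))
    (hE : MeasurableSet E) (hEpos : 0 < volume E)
    (hhull : volume {x : Fin (n + 1) → (Fin n → ℝ) |
        (∀ i, x i ∈ E) ∧ volume (convexHull ℝ (Set.range x) \ E) ≠ 0} = 0) :
    IsOpen (convexHull ℝ (densityPoints E)) ∧
      volume (symmDiff (convexHull ℝ (densityPoints E)) E) = 0 :=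
  convexHull_densityPoints_of_ae_hulls_general E hE hhull
end

section
/- Let f : ℝⁿ → [0,∞) be measurable with {x : f(x) > 0} of positive measure, such that every superlevel set E_s = {x : f(x) > s} (s > 0) is convex and bounded. Let G ⊆ Aff(ℝⁿ) be the set of invertible affine maps g with g(E_s) = E_s up to a null set for every s > 0. Then G is a compact subgroup of the affine group. -/
/-!
Write `g x = A x + b`. If `g '' E =ᵐ E` for a bounded convex `E` of positive measure, then
`|det A| = 1`, and `g` maps `closure E` into itself: `g '' E` is convex of positive measure, so its
closure is the closure of its interior, and an open set a.e. contained in the closed set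
`closure E` is contained in it. Conversely, `|det A| = 1` and `g '' closure E ⊆ closure E` give
`g '' E =ᵐ E`, because `closure E` has finite measure and differs from `E` by a null set. Hence
the stabilizer is cut out by closed conditions, and it is bounded because the affine maps sending
a bounded set containing a ball into itself are uniformly bounded.
-/

open MeasureTheory Set Matrix Metric Bornology Function
open scoped ENNReal

section Convex

variable {E : Type*} [NormedAddCommGroup E] [NormedSpace ℝ E] [MeasurableSpace E] [BorelSpace E]
  [FiniteDimensional ℝ E] {μ : Measure E} [μ.IsAddHaarMeasure] {S C : Set E}

theorem Convex.interior_nonempty_of_measure_ne_zero (hS : Convex ℝ S) (hμS : μ S ≠ 0) :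
    (interior S).Nonempty := by
  by_contra! h
  refine hμS (measure_mono_null ?_ (hS.addHaar_frontier μ))
  rw [frontier, h, sdiff_empty]
  exact subset_closure

theorem Convex.closure_subset_of_ae_le (hS : Convex ℝ S) (hμS : μ S ≠ 0) (hC : IsClosed C)
    (h : S ≤ᵐ[μ] C) : closure S ⊆ C := by
  rw [← hS.closure_interior_eq_closure_of_nonempty_interior
    (hS.interior_nonempty_of_measure_ne_zero hμS)]
  refine closure_minimal (sdiff_eq_empty.mp ?_) hC
  refine ((isOpen_interior.sdiff hC).measure_eq_zero_iff μ).mp ?_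
  exact measure_mono_null (sdiff_subset_sdiff_left interior_subset) (ae_le_set.mp h)

end Convex

theorem exists_measure_superlevel_ne_zero {α : Type*} [MeasurableSpace α] {μ : Measure α}
    {f : α → ℝ} (h : μ {x | 0 < f x} ≠ 0) : ∃ s > 0, μ {x | s < f x} ≠ 0 := by
  by_contra! hnull
  refine h (measure_mono_null (fun x (hx : 0 < f x) => ?_)
    (measure_iUnion_null fun n : ℕ => hnull (1 / (n + 1)) Nat.one_div_pos_of_nat))
  exact mem_iUnion.mpr (exists_nat_one_div_lt hx)

namespace Matrix

section Algebra

variable {ι R : Type*} [Fintype ι] [CommRing R]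

def mulVecAdd (A : Matrix ι ι R) (b : ι → R) (x : ι → R) : ι → R := A *ᵥ x + b

theorem mulVecAdd_comp (A B : Matrix ι ι R) (a b : ι → R) :
    mulVecAdd A a ∘ mulVecAdd B b = mulVecAdd (A * B) (A *ᵥ b + a) := by
  funext x
  simp only [Function.comp_apply, mulVecAdd, mulVec_add, mulVec_mulVec, add_assoc]

variable [DecidableEq ι]

theorem mulVecAdd_one_zero : mulVecAdd (1 : Matrix ι ι R) 0 = id := by
  funext x
  simp [mulVecAdd]

theorem mulVecAdd_inv_comp {A : Matrix ι ι R} (hA : IsUnit A) (b : ι → R) :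
    mulVecAdd A⁻¹ (-(A⁻¹ *ᵥ b)) ∘ mulVecAdd A b = id := by
  rw [mulVecAdd_comp, nonsing_inv_mul _ ((isUnit_iff_isUnit_det A).mp hA), add_neg_cancel,
    mulVecAdd_one_zero]

theorem mulVecAdd_injective {A : Matrix ι ι R} (hA : IsUnit A) (b : ι → R) :
    Injective (mulVecAdd A b) :=
  (leftInverse_iff_comp.mpr (mulVecAdd_inv_comp hA b)).injective

end Algebra

section Real

variable {ι : Type*} [Fintype ι] {A : Matrix ι ι ℝ} {b : ι → ℝ} {S K : Set (ι → ℝ)}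

theorem mulVecAdd_eq_comp (A : Matrix ι ι ℝ) (b : ι → ℝ) :
    mulVecAdd A b = (· + b) ∘ mulVecLin A := by
  funext x
  simp [mulVecAdd]

theorem continuous_mulVecAdd (A : Matrix ι ι ℝ) (b : ι → ℝ) : Continuous (mulVecAdd A b) :=
  (continuous_const.matrix_mulVec continuous_id).add continuous_const

theorem continuous_mulVecAdd_apply (x : ι → ℝ) :
    Continuous fun p : Matrix ι ι ℝ × (ι → ℝ) => mulVecAdd p.1 p.2 x :=
  (continuous_fst.matrix_mulVec continuous_const).add continuous_snd

theorem isClosed_setOf_mapsTo_mulVecAdd (hK : IsClosed K) :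
    IsClosed {p : Matrix ι ι ℝ × (ι → ℝ) | MapsTo (mulVecAdd p.1 p.2) K K} := by
  simp only [MapsTo, ofPred_forall]
  exact isClosed_iInter fun x => isClosed_iInter fun _ => hK.preimage (continuous_mulVecAdd_apply x)

theorem _root_.Convex.mulVecAdd_image (hS : Convex ℝ S) (A : Matrix ι ι ℝ) (b : ι → ℝ) :
    Convex ℝ (mulVecAdd A b '' S) := by
  rw [mulVecAdd_eq_comp, image_comp]
  simpa only [add_comm _ b] using (hS.linear_image (mulVecLin A)).translate b

theorem mapsTo_closure_of_image_ae_eq (hS : Convex ℝ S) (hS₀ : volume S ≠ 0)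
    (h : mulVecAdd A b '' S =ᵐ[volume] S) :
    MapsTo (mulVecAdd A b) (closure S) (closure S) := by
  have himage₀ : volume (mulVecAdd A b '' S) ≠ 0 := by rwa [measure_congr h]
  refine mapsTo_iff_image_subset.mpr ((image_closure_subset_closure_image
    (continuous_mulVecAdd A b)).trans ?_)
  exact (hS.mulVecAdd_image A b).closure_subset_of_ae_le himage₀ isClosed_closure
    (h.le.trans subset_closure.eventuallyLE)

section Norm

open scoped Matrix.Norms.Operator

theorem norm_le_of_mapsTo_mulVecAdd {y : ι → ℝ} {r R : ℝ} (hr : 0 < r)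
    (hyK : closedBall y r ⊆ K) (hKR : K ⊆ closedBall 0 R) (h : MapsTo (mulVecAdd A b) K K) :
    ‖A‖ ≤ 2 * R / r ∧ ‖b‖ ≤ R + 2 * R / r * ‖y‖ := by
  have hg : ∀ x ∈ K, ‖mulVecAdd A b x‖ ≤ R := fun x hx => mem_closedBall_zero_iff.mp (hKR (h hx))
  have hy : y ∈ K := hyK (mem_closedBall_self hr.le)
  have hR : 0 ≤ R := (norm_nonneg _).trans (hg y hy)
  have hA : ‖A‖ ≤ 2 * R / r := by
    rw [linfty_opNorm_eq_opNorm]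
    refine ContinuousLinearMap.opNorm_le_of_unit_norm (by positivity) fun x hx => ?_
    have hyx : y + r • x ∈ K := hyK <| by
      rw [mem_closedBall, dist_self_add_left, norm_smul, hx, Real.norm_of_nonneg hr.le, mul_one]
    have hdiff : r • (A *ᵥ x) = mulVecAdd A b (y + r • x) - mulVecAdd A b y := by
      simp only [mulVecAdd, mulVec_add, mulVec_smul]
      abel
    rw [le_div_iff₀ hr, mul_comm]
    calc r * ‖A *ᵥ x‖ = ‖r • (A *ᵥ x)‖ := by rw [norm_smul, Real.norm_of_nonneg hr.le]
      _ ≤ R + R := hdiff ▸ (norm_sub_le _ _).trans (add_le_add (hg _ hyx) (hg y hy))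
      _ = 2 * R := by ring
  refine ⟨hA, ?_⟩
  calc ‖b‖ = ‖mulVecAdd A b y - A *ᵥ y‖ := by simp [mulVecAdd]
    _ ≤ R + ‖A‖ * ‖y‖ := (norm_sub_le _ _).trans (add_le_add (hg y hy) (linfty_opNorm_mulVec A y))
    _ ≤ R + 2 * R / r * ‖y‖ := by gcongr

theorem isBounded_setOf_mapsTo_mulVecAdd (hK : IsBounded K) (hK' : (interior K).Nonempty) :
    IsBounded {p : Matrix ι ι ℝ × (ι → ℝ) | MapsTo (mulVecAdd p.1 p.2) K K} := by
  obtain ⟨y, hy⟩ := hK'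
  obtain ⟨r, hr, hyK⟩ := nhds_basis_closedBall.mem_iff.mp (mem_interior_iff_mem_nhds.mp hy)
  obtain ⟨R, hKR⟩ := hK.subset_closedBall 0
  refine ((isBounded_closedBall (x := 0) (r := 2 * R / r)).prod
    (isBounded_closedBall (x := 0) (r := R + 2 * R / r * ‖y‖))).subset fun p hp => ?_
  obtain ⟨hA, hb⟩ := norm_le_of_mapsTo_mulVecAdd hr hyK hKR hp
  exact ⟨mem_closedBall_zero_iff.mpr hA, mem_closedBall_zero_iff.mpr hb⟩

end Norm

end Real

section Volume

variable {ι : Type*} [Fintype ι] [DecidableEq ι] {A : Matrix ι ι ℝ} {b : ι → ℝ}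
  {S T : Set (ι → ℝ)}

theorem volume_image_mulVecAdd (A : Matrix ι ι ℝ) (b : ι → ℝ) (S : Set (ι → ℝ)) :
    volume (mulVecAdd A b '' S) = ENNReal.ofReal |A.det| * volume S := by
  rw [mulVecAdd_eq_comp, image_comp, image_add_right, measure_preimage_add_right,
    ← toLin'_apply', Measure.addHaar_image_linearMap, LinearMap.det_toLin']

theorem image_mulVecAdd_ae_eq (hA : IsUnit A) (b : ι → ℝ) (h : S =ᵐ[volume] T) :
    mulVecAdd A b '' S =ᵐ[volume] mulVecAdd A b '' T := by
  rw [ae_eq_set] at h ⊢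
  simp only [← image_sdiff (mulVecAdd_injective hA b), volume_image_mulVecAdd, h.1, h.2,
    mul_zero, and_self]

theorem abs_det_eq_one_of_image_ae_eq (hS₀ : volume S ≠ 0) (hS : volume S ≠ ∞)
    (h : mulVecAdd A b '' S =ᵐ[volume] S) : |A.det| = 1 := by
  have hvol := measure_congr h
  rw [volume_image_mulVecAdd, ENNReal.mul_eq_right hS₀ hS] at hvol
  exact ENNReal.ofReal_eq_one.mp hvol

theorem image_ae_eq_of_mapsTo_closure (hdet : |A.det| = 1) (hS : Convex ℝ S)
    (hSb : IsBounded S) (h : MapsTo (mulVecAdd A b) (closure S) (closure S)) :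
    mulVecAdd A b '' S =ᵐ[volume] S := by
  have hA : IsUnit A := (isUnit_iff_isUnit_det A).mpr <| isUnit_iff_ne_zero.mpr fun h0 => by
    simp [h0] at hdet
  have hcl : closure S =ᵐ[volume] S := closure_ae_eq_of_null_frontier (hS.addHaar_frontier volume)
  have himage : mulVecAdd A b '' closure S =ᵐ[volume] closure S :=
    ae_eq_of_subset_of_measure_ge h.image_subset
      (by rw [volume_image_mulVecAdd, hdet, ENNReal.ofReal_one, one_mul])
      ((hS.closure.mulVecAdd_image A b).nullMeasurableSet volume) hSb.closure.measure_lt_top.ne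
  exact ((image_mulVecAdd_ae_eq hA b hcl.symm).trans himage).trans hcl

end Volume

end Matrix

section AEStabilizer

variable {ι κ : Type*} [Fintype ι] [DecidableEq ι] {E : κ → Set (ι → ℝ)}

def affineAEStabilizer (E : κ → Set (ι → ℝ)) : Set (Matrix ι ι ℝ × (ι → ℝ)) :=
  {p | IsUnit p.1 ∧ ∀ k, mulVecAdd p.1 p.2 '' E k =ᵐ[volume] E k}

theorem one_mem_affineAEStabilizer : ((1 : Matrix ι ι ℝ), (0 : ι → ℝ)) ∈ affineAEStabilizer E :=
  ⟨isUnit_one, fun _ => .of_eq (by rw [mulVecAdd_one_zero, image_id])⟩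

theorem mul_mem_affineAEStabilizer {p q : Matrix ι ι ℝ × (ι → ℝ)}
    (hp : p ∈ affineAEStabilizer E) (hq : q ∈ affineAEStabilizer E) :
    (p.1 * q.1, p.1 *ᵥ q.2 + p.2) ∈ affineAEStabilizer E := by
  refine ⟨hp.1.mul hq.1, fun k => ?_⟩
  rw [← mulVecAdd_comp, image_comp]
  exact (image_mulVecAdd_ae_eq hp.1 p.2 (hq.2 k)).trans (hp.2 k)

theorem inv_mem_affineAEStabilizer {p : Matrix ι ι ℝ × (ι → ℝ)} (hp : p ∈ affineAEStabilizer E) :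
    (p.1⁻¹, -(p.1⁻¹ *ᵥ p.2)) ∈ affineAEStabilizer E := by
  have hinv : IsUnit p.1⁻¹ := isUnit_nonsing_inv_iff.mpr hp.1
  refine ⟨hinv, fun k => ?_⟩
  have h := image_mulVecAdd_ae_eq hinv (-(p.1⁻¹ *ᵥ p.2)) (hp.2 k)
  rw [← image_comp, mulVecAdd_inv_comp hp.1, image_id] at h
  exact h.symm

theorem affineAEStabilizer_eq (hconv : ∀ k, Convex ℝ (E k)) (hbdd : ∀ k, IsBounded (E k))
    {k₀ : κ} (h₀ : volume (E k₀) ≠ 0) :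
    affineAEStabilizer E = {p | |p.1.det| = 1 ∧ ∀ k, volume (E k) ≠ 0 →
      MapsTo (mulVecAdd p.1 p.2) (closure (E k)) (closure (E k))} := by
  ext ⟨A, b⟩
  constructor
  · rintro ⟨-, hE⟩
    exact ⟨abs_det_eq_one_of_image_ae_eq h₀ (hbdd k₀).measure_lt_top.ne (hE k₀),
      fun k hk => mapsTo_closure_of_image_ae_eq (hconv k) hk (hE k)⟩
  · rintro ⟨hdet, hmaps⟩
    refine ⟨(isUnit_iff_isUnit_det A).mpr (isUnit_iff_ne_zero.mpr fun h0 => by simp [h0] at hdet),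
      fun k => ?_⟩
    by_cases hk : volume (E k) = 0
    · have himage : volume (mulVecAdd A b '' E k) = 0 := by
        rw [volume_image_mulVecAdd, hk, mul_zero]
      exact (ae_eq_empty.mpr himage).trans (ae_eq_empty.mpr hk).symm
    · exact image_ae_eq_of_mapsTo_closure hdet (hconv k) (hbdd k) (hmaps k hk)

theorem isClosed_affineAEStabilizer (hconv : ∀ k, Convex ℝ (E k))
    (hbdd : ∀ k, IsBounded (E k)) {k₀ : κ} (h₀ : volume (E k₀) ≠ 0) :
    IsClosed (affineAEStabilizer E) := by
  rw [affineAEStabilizer_eq hconv hbdd h₀, ofPred_and]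
  refine (isClosed_eq continuous_fst.matrix_det.abs continuous_const).inter ?_
  simp only [ofPred_forall]
  exact isClosed_iInter fun k => isClosed_iInter fun _ =>
    isClosed_setOf_mapsTo_mulVecAdd isClosed_closure

open scoped Matrix.Norms.Operator in
theorem isCompact_affineAEStabilizer (hconv : ∀ k, Convex ℝ (E k))
    (hbdd : ∀ k, IsBounded (E k)) (hpos : ∃ k, volume (E k) ≠ 0) :
    IsCompact (affineAEStabilizer E) := by
  obtain ⟨k₀, h₀⟩ := hpos
  have hint : (interior (closure (E k₀))).Nonempty :=
    ((hconv k₀).interior_nonempty_of_measure_ne_zero h₀).mono (interior_mono subset_closure)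
  refine isCompact_of_isClosed_isBounded (isClosed_affineAEStabilizer hconv hbdd h₀) ?_
  exact (isBounded_setOf_mapsTo_mulVecAdd (hbdd k₀).closure hint).subset fun p hp =>
    mapsTo_closure_of_image_ae_eq (hconv k₀) h₀ (hp.2 k₀)

end AEStabilizer

theorem symmetry_group_compact_subgroup_general {n : ℕ}
    (f : (Fin n → ℝ) → ℝ)
    (hpos : 0 < volume {x : Fin n → ℝ | 0 < f x})
    (hconv : ∀ s : ℝ, 0 < s → Convex ℝ {x : Fin n → ℝ | s < f x})
    (hbdd : ∀ s : ℝ, 0 < s → Bornology.IsBounded {x : Fin n → ℝ | s < f x})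
    (G : Set (Matrix (Fin n) (Fin n) ℝ × (Fin n → ℝ)))
    (hG : G = {p | IsUnit p.1 ∧ ∀ s : ℝ, 0 < s →
        volume (symmDiff ((fun x => p.1.mulVec x + p.2) '' {x | s < f x})
          {x | s < f x}) = 0}) :
    IsCompact G ∧
    ((1 : Matrix (Fin n) (Fin n) ℝ), (0 : Fin n → ℝ)) ∈ G ∧
    (∀ p q, p ∈ G → q ∈ G → (p.1 * q.1, p.1.mulVec q.2 + p.2) ∈ G) ∧
    (∀ p, p ∈ G → (p.1⁻¹, -(p.1⁻¹.mulVec p.2)) ∈ G) := by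
  have hG' : G = affineAEStabilizer fun s : Ioi (0 : ℝ) => {x | (s : ℝ) < f x} := by
    simp only [hG, affineAEStabilizer, measure_symmDiff_eq_zero_iff, Subtype.forall, mem_Ioi]
    rfl
  obtain ⟨s₀, hs₀, h₀⟩ := exists_measure_superlevel_ne_zero hpos.ne'
  subst hG'
  exact ⟨isCompact_affineAEStabilizer (fun s : Ioi (0 : ℝ) => hconv s s.2)
    (fun s : Ioi (0 : ℝ) => hbdd s s.2) ⟨⟨s₀, hs₀⟩, h₀⟩,
    one_mem_affineAEStabilizer, fun _ _ => mul_mem_affineAEStabilizer,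
    fun _ => inv_mem_affineAEStabilizer⟩

/-- The symmetry group of the superlevel sets of `f`, viewed inside the affine
group realized as pairs `(A, b)` with `A ∈ GL(n, ℝ)`, `b ∈ ℝⁿ`, acting by
`x ↦ A x + b`. If `f ≥ 0` is measurable with `{f > 0}` of positive measure and
all superlevel sets convex and bounded, then this group is compact and is a
subgroup (contains the identity and is closed under composition and inverse). -/
theorem symmetry_group_compact_subgroup {n : ℕ}
    (f : (Fin n → ℝ) → ℝ) (hf_meas : Measurable f) (hf_nonneg : ∀ x, 0 ≤ f x)
    (hpos : 0 < volume {x : Fin n → ℝ | 0 < f x})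
    (hconv : ∀ s : ℝ, 0 < s → Convex ℝ {x : Fin n → ℝ | s < f x})
    (hbdd : ∀ s : ℝ, 0 < s → Bornology.IsBounded {x : Fin n → ℝ | s < f x})
    (G : Set (Matrix (Fin n) (Fin n) ℝ × (Fin n → ℝ)))
    (hG : G = {p | IsUnit p.1 ∧ ∀ s : ℝ, 0 < s →
        volume (symmDiff ((fun x => p.1.mulVec x + p.2) '' {x | s < f x})
          {x | s < f x}) = 0}) :
    IsCompact G ∧
    ((1 : Matrix (Fin n) (Fin n) ℝ), (0 : Fin n → ℝ)) ∈ G ∧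
    (∀ p q, p ∈ G → q ∈ G → (p.1 * q.1, p.1.mulVec q.2 + p.2) ∈ G) ∧
    (∀ p, p ∈ G → (p.1⁻¹, -(p.1⁻¹.mulVec p.2)) ∈ G) :=
  symmetry_group_compact_subgroup_general f hpos hconv hbdd G hG
end

section
/- Every compact subgroup of the group of invertible affine transformations of ℝⁿ is conjugate, by an invertible affine transformation, to a subgroup of the orthogonal group O(n). -/
/-
Average over the normalized Haar measure of the compact group. The translation parts form a
cocycle `b (g h) = A g (b h) + b g`, so their mean is a common fixed point `c`. The mean of
`Aᵀ A` against the right-invariant measure is a positive definite `S` with `Aᵀ S A = S`. Writing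
`S = Pᵀ P`, conjugating by `x ↦ P⁻¹ x + c` moves `c` to the origin and turns each linear part `A`
into `P A P⁻¹`, which is orthogonal.
-/

open Matrix

/-- Composition in the affine group realized as pairs `(A, b)`, acting by
`x ↦ A x + b`. -/
def affMul {n : ℕ} (p q : Matrix (Fin n) (Fin n) ℝ × (Fin n → ℝ)) :
    Matrix (Fin n) (Fin n) ℝ × (Fin n → ℝ) :=
  (p.1 * q.1, p.1.mulVec q.2 + p.2)

/-- Inverse in the affine group realized as pairs `(A, b)`. -/
noncomputable def affInv {n : ℕ} (p : Matrix (Fin n) (Fin n) ℝ × (Fin n → ℝ)) :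
    Matrix (Fin n) (Fin n) ℝ × (Fin n → ℝ) :=
  (p.1⁻¹, -(p.1⁻¹.mulVec p.2))

open MeasureTheory

section AffMul

variable {n : ℕ}

theorem affMul_assoc (p q r : Matrix (Fin n) (Fin n) ℝ × (Fin n → ℝ)) :
    affMul (affMul p q) r = affMul p (affMul q r) := by
  simp only [affMul, Matrix.mul_assoc, mulVec_add, mulVec_mulVec, add_assoc]

theorem one_affMul (p : Matrix (Fin n) (Fin n) ℝ × (Fin n → ℝ)) : affMul (1, 0) p = p := by
  simp [affMul]

theorem affMul_one (p : Matrix (Fin n) (Fin n) ℝ × (Fin n → ℝ)) : affMul p (1, 0) = p := by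
  simp [affMul]

theorem affMul_affInv {p : Matrix (Fin n) (Fin n) ℝ × (Fin n → ℝ)} (hp : IsUnit p.1) :
    affMul p (affInv p) = (1, 0) := by
  simp [affMul, affInv, mulVec_neg, mulVec_mulVec,
    mul_nonsing_inv _ ((isUnit_iff_isUnit_det _).mp hp)]

theorem affInv_affMul {p : Matrix (Fin n) (Fin n) ℝ × (Fin n → ℝ)} (hp : IsUnit p.1) :
    affMul (affInv p) p = (1, 0) := by
  simp [affMul, affInv, nonsing_inv_mul _ ((isUnit_iff_isUnit_det _).mp hp)]

theorem affMul_affInv_affMul (φ p : Matrix (Fin n) (Fin n) ℝ × (Fin n → ℝ)) :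
    affMul (affInv φ) (affMul p φ) = (φ.1⁻¹ * p.1 * φ.1, φ.1⁻¹ *ᵥ (p.1 *ᵥ φ.2 + p.2 - φ.2)) := by
  simp only [affMul, affInv, Matrix.mul_assoc, mulVec_sub, ← sub_eq_add_neg]

end AffMul

/-- A type synonym carrying `affMul` as its multiplication; its group of units is the affine
group. -/
def AffinePair (n : ℕ) : Type := Matrix (Fin n) (Fin n) ℝ × (Fin n → ℝ)

namespace AffinePair

variable {n : ℕ}

instance : Monoid (AffinePair n) where
  mul := affMul
  one := ((1 : Matrix (Fin n) (Fin n) ℝ), (0 : Fin n → ℝ))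
  mul_assoc := affMul_assoc
  one_mul := one_affMul
  mul_one := affMul_one

theorem mul_def (p q : AffinePair n) : p * q = affMul p q := rfl

instance : TopologicalSpace (AffinePair n) :=
  inferInstanceAs (TopologicalSpace (Matrix (Fin n) (Fin n) ℝ × (Fin n → ℝ)))

instance : T2Space (AffinePair n) :=
  inferInstanceAs (T2Space (Matrix (Fin n) (Fin n) ℝ × (Fin n → ℝ)))

instance : ContinuousMul (AffinePair n) where
  continuous_mul := by
    simp only [mul_def, affMul]
    fun_prop

def linearPart : AffinePair n →* Matrix (Fin n) (Fin n) ℝ where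
  toFun := Prod.fst
  map_one' := rfl
  map_mul' _ _ := rfl

theorem continuous_linearPart : Continuous (linearPart (n := n)) := continuous_fst

protected theorem continuous_snd : Continuous fun p : AffinePair n => p.2 := continuous_snd

theorem isUnit_iff {p : AffinePair n} : IsUnit p ↔ IsUnit p.1 :=
  ⟨fun hp => hp.map linearPart,
    fun hp => isUnit_iff_exists.mpr ⟨affInv p, affMul_affInv hp, affInv_affMul hp⟩⟩

theorem val_inv (u : (AffinePair n)ˣ) :
    ((u⁻¹ : (AffinePair n)ˣ) : AffinePair n) = affInv (u : AffinePair n) :=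
  Units.inv_eq_of_mul_eq_one_right (affMul_affInv (isUnit_iff.mp u.isUnit))

theorem exists_isCompact_subgroup {G : Set (Matrix (Fin n) (Fin n) ℝ × (Fin n → ℝ))}
    (hunit : ∀ p ∈ G, IsUnit p.1) (hcompact : IsCompact G)
    (hone : ((1 : Matrix (Fin n) (Fin n) ℝ), (0 : Fin n → ℝ)) ∈ G)
    (hmul : ∀ p ∈ G, ∀ q ∈ G, affMul p q ∈ G) (hinv : ∀ p ∈ G, affInv p ∈ G) :
    ∃ K : Subgroup (AffinePair n)ˣ, IsCompact (K : Set (AffinePair n)ˣ) ∧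
      ∀ p ∈ G, ∃ u ∈ K, (u : AffinePair n) = p := by
  let S : Submonoid (AffinePair n) := ⟨⟨G, fun {p q} hp hq => hmul p hp q hq⟩, hone⟩
  refine ⟨S.units, Submonoid.units_isCompact (S := S) hcompact, fun p hp => ?_⟩
  let u := (isUnit_iff.mpr (hunit p hp)).unit
  refine ⟨u, S.mem_units_of_val_mem_inv_val_mem (x := u) hp ?_, rfl⟩
  rw [val_inv]
  exact hinv p hp

end AffinePair

namespace Matrix

variable {ι : Type*} [Fintype ι] [DecidableEq ι]

theorem mul_mul_inv_mem_orthogonalGroup {R : Type*} [CommRing R] {P A : Matrix ι ι R}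
    (hP : IsUnit P) (hA : Aᵀ * (Pᵀ * P) * A = Pᵀ * P) :
    P * A * P⁻¹ ∈ orthogonalGroup ι R := by
  have hPdet : IsUnit P.det := (isUnit_iff_isUnit_det P).mp hP
  rw [mem_orthogonalGroup_iff']
  calc (P * A * P⁻¹)ᵀ * (P * A * P⁻¹) = P⁻¹ᵀ * (Aᵀ * (Pᵀ * P) * A) * P⁻¹ := by
        simp only [transpose_mul, Matrix.mul_assoc]
    _ = (P * P⁻¹)ᵀ * (P * P⁻¹) := by
        rw [hA, transpose_mul, transpose_nonsing_inv]; simp only [Matrix.mul_assoc]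
    _ = 1 := by rw [mul_nonsing_inv P hPdet, transpose_one, Matrix.mul_one]

open scoped ComplexOrder MatrixOrder in
theorem PosDef.exists_isUnit_conjTranspose_mul_self_eq {𝕜 : Type*} [RCLike 𝕜] {S : Matrix ι ι 𝕜}
    (hS : S.PosDef) : ∃ P : Matrix ι ι 𝕜, IsUnit P ∧ Pᴴ * P = S := by
  have hsqrt := CFC.sqrt_nonneg S
  refine ⟨CFC.sqrt S, (CFC.isUnit_sqrt_iff S hS.posSemidef.nonneg).mpr hS.isUnit, ?_⟩
  rw [hsqrt.posSemidef.isHermitian.eq, CFC.sqrt_mul_sqrt_self S hS.posSemidef.nonneg]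

end Matrix

section Averaging

variable {G : Type*} [Group G] [MeasurableSpace G] (μ : Measure G)

theorem integral_fixed_of_cocycle {E : Type*} [NormedAddCommGroup E] [NormedSpace ℝ E]
    [CompleteSpace E] [MeasurableMul G] [IsProbabilityMeasure μ] [μ.IsMulLeftInvariant]
    (A : G → E →L[ℝ] E) {b : G → E} (hb : Integrable b μ)
    (hcocycle : ∀ g h, b (g * h) = A g (b h) + b g) (g : G) :
    A g (∫ h, b h ∂μ) + b g = ∫ h, b h ∂μ :=
  calc A g (∫ h, b h ∂μ) + b g = ∫ h, (A g (b h) + b g) ∂μ := by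
        rw [integral_add ((A g).integrable_comp hb) (integrable_const _),
          (A g).integral_comp_comm hb, integral_const, probReal_univ, one_smul]
    _ = ∫ h, b (g * h) ∂μ := by simp only [hcocycle]
    _ = ∫ h, b h ∂μ := integral_mul_left_eq_self b g

variable {ι : Type*} [Fintype ι] [DecidableEq ι]

-- Matrices carry no global norm; the entrywise sup norm gives matrix-valued Bochner integrals.
noncomputable local instance : NormedAddCommGroup (Matrix ι ι ℝ) :=
  inferInstanceAs (NormedAddCommGroup (ι → ι → ℝ))

noncomputable local instance : NormedSpace ℝ (Matrix ι ι ℝ) :=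
  inferInstanceAs (NormedSpace ℝ (ι → ι → ℝ))

theorem transpose_mul_integral_mul_eq [MeasurableMul G] [μ.IsMulRightInvariant]
    (A : G →* Matrix ι ι ℝ) (hA : Integrable (fun k => (A k)ᵀ * A k) μ) (g : G) :
    (A g)ᵀ * (∫ k, (A k)ᵀ * A k ∂μ) * A g = ∫ k, (A k)ᵀ * A k ∂μ :=
  calc (A g)ᵀ * (∫ k, (A k)ᵀ * A k ∂μ) * A g = ∫ k, (A g)ᵀ * ((A k)ᵀ * A k) * A g ∂μ := by
        simpa using ((LinearMap.mulLeftRight ℝ ((A g)ᵀ, A g)).toContinuousLinearMap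
          |>.integral_comp_comm hA).symm
    _ = ∫ k, (A (k * g))ᵀ * A (k * g) ∂μ := by
        simp only [map_mul, transpose_mul, Matrix.mul_assoc]
    _ = ∫ k, (A k)ᵀ * A k ∂μ := integral_mul_right_eq_self (fun k => (A k)ᵀ * A k) g

theorem posDef_integral_transpose_mul_self [NeZero μ] (A : G →* Matrix ι ι ℝ)
    (hA : Integrable (fun k => (A k)ᵀ * A k) μ) : (∫ k, (A k)ᵀ * A k ∂μ).PosDef := by
  refine .of_dotProduct_mulVec_pos ?_ fun x hx => ?_
  · rw [IsHermitian, conjTranspose_eq_transpose_of_trivial]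
    calc (∫ k, (A k)ᵀ * A k ∂μ)ᵀ = ∫ k, ((A k)ᵀ * A k)ᵀ ∂μ :=
          ((transposeLinearEquiv ι ι ℝ ℝ).toLinearMap.toContinuousLinearMap.integral_comp_comm
            hA).symm
      _ = ∫ k, (A k)ᵀ * A k ∂μ := by simp only [transpose_mul, transpose_transpose]
  · let q : Matrix ι ι ℝ →ₗ[ℝ] ℝ :=
      { toFun := fun M => star x ⬝ᵥ M *ᵥ x
        map_add' := fun M N => by simp only [add_mulVec, dotProduct_add]
        map_smul' := fun r M => by simp only [smul_mulVec, dotProduct_smul, RingHom.id_apply] }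
    have hsq (k : G) : q ((A k)ᵀ * A k) = star (A k *ᵥ x) ⬝ᵥ (A k *ᵥ x) := by
      simp only [q, LinearMap.coe_mk, AddHom.coe_mk, star_trivial]
      rw [← mulVec_mulVec, dotProduct_mulVec, vecMul_transpose]
    have hpos (k : G) : 0 < q ((A k)ᵀ * A k) := by
      have hinj := mulVec_injective_iff_isUnit.mpr ((Group.isUnit k).map A)
      rw [hsq, dotProduct_star_self_pos_iff]
      exact fun h => hx (hinj (h.trans (mulVec_zero _).symm))
    have hint : Integrable (fun k => q ((A k)ᵀ * A k)) μ :=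
      q.toContinuousLinearMap.integrable_comp hA
    calc 0 < ∫ k, q ((A k)ᵀ * A k) ∂μ := by
          rw [integral_pos_iff_support_of_nonneg (fun k => (hpos k).le) hint,
            Function.support_eq_univ fun k => (hpos k).ne']
          exact Measure.measure_univ_pos.mpr (NeZero.ne μ)
      _ = star x ⬝ᵥ (∫ k, (A k)ᵀ * A k ∂μ) *ᵥ x := q.toContinuousLinearMap.integral_comp_comm hA

open TopologicalSpace in
theorem AffinePair.exists_fixed_point_and_invariant_posDef {n : ℕ}
    (K : Subgroup (AffinePair n)ˣ) (hK : IsCompact (K : Set (AffinePair n)ˣ)) :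
    ∃ (c : Fin n → ℝ) (S : Matrix (Fin n) (Fin n) ℝ), S.PosDef ∧ ∀ u ∈ K,
      (u : AffinePair n).1 *ᵥ c + (u : AffinePair n).2 = c ∧
        (u : AffinePair n).1ᵀ * S * (u : AffinePair n).1 = S := by
  have : CompactSpace K := isCompact_iff_compactSpace.mp hK
  let _ : MeasurableSpace K := borel K
  have : BorelSpace K := ⟨rfl⟩
  let μ : Measure K := Measure.haarMeasure ⊤
  have : IsProbabilityMeasure μ := ⟨by
    rw [← PositiveCompacts.coe_top (α := K)]
    exact Measure.haarMeasure_self⟩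
  -- `μ.inv` is right invariant, by `Measure.inv.instIsMulRightInvariant`.
  have : IsProbabilityMeasure μ.inv := ⟨by rw [Measure.inv_apply, Set.inv_univ, measure_univ]⟩
  let A : K →* Matrix (Fin n) (Fin n) ℝ := linearPart.comp ((Units.coeHom _).comp K.subtype)
  let b : K → Fin n → ℝ := fun u => ((u : (AffinePair n)ˣ) : AffinePair n).2
  have hval : Continuous fun u : K => ((u : (AffinePair n)ˣ) : AffinePair n) :=
    Units.continuous_val.comp continuous_subtype_val
  have hA : Continuous A := continuous_linearPart.comp hval
  have hb : Integrable b μ :=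
    (AffinePair.continuous_snd.comp hval).integrable_of_hasCompactSupport (.of_compactSpace _)
  have hAA : Integrable (fun k => (A k)ᵀ * A k) μ.inv :=
    (hA.matrix_transpose.matrix_mul hA).integrable_of_hasCompactSupport (.of_compactSpace _)
  refine ⟨∫ k, b k ∂μ, ∫ k, (A k)ᵀ * A k ∂μ.inv, posDef_integral_transpose_mul_self μ.inv A hAA,
    fun u hu => ⟨?_, transpose_mul_integral_mul_eq μ.inv A hAA ⟨u, hu⟩⟩⟩
  exact integral_fixed_of_cocycle μ (fun k => (A k).mulVecLin.toContinuousLinearMap) hb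
    (fun _ _ => rfl) ⟨u, hu⟩

end Averaging

/-- Every compact subgroup of the affine group of `ℝⁿ` is conjugate, by an
invertible affine transformation, to a subgroup of the orthogonal group `O(n)`
(in particular, the conjugated elements are linear). -/
theorem compact_affine_subgroup_conjugate_orthogonal {n : ℕ}
    (G : Set (Matrix (Fin n) (Fin n) ℝ × (Fin n → ℝ)))
    (hunit : ∀ p ∈ G, IsUnit p.1)
    (hcompact : IsCompact G)
    (hone : ((1 : Matrix (Fin n) (Fin n) ℝ), (0 : Fin n → ℝ)) ∈ G)
    (hmul : ∀ p ∈ G, ∀ q ∈ G, affMul p q ∈ G)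
    (hinv : ∀ p ∈ G, affInv p ∈ G) :
    ∃ φ : Matrix (Fin n) (Fin n) ℝ × (Fin n → ℝ), IsUnit φ.1 ∧
      ∀ p ∈ G, (affMul (affInv φ) (affMul p φ)).1 ∈ Matrix.orthogonalGroup (Fin n) ℝ ∧
        (affMul (affInv φ) (affMul p φ)).2 = 0 := by
  obtain ⟨K, hK, hGK⟩ := AffinePair.exists_isCompact_subgroup hunit hcompact hone hmul hinv
  obtain ⟨c, S, hS, hcS⟩ := AffinePair.exists_fixed_point_and_invariant_posDef K hK
  obtain ⟨P, hP, rfl⟩ := hS.exists_isUnit_conjTranspose_mul_self_eq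
  refine ⟨(P⁻¹, c), isUnit_nonsing_inv_iff.mpr hP, fun p hp => ?_⟩
  obtain ⟨u, hu, hup⟩ := hGK p hp
  obtain ⟨hfix, hinvariant⟩ := hup ▸ hcS u hu
  rw [conjTranspose_eq_transpose_of_trivial] at hinvariant
  rw [affMul_affInv_affMul, nonsing_inv_nonsing_inv P ((isUnit_iff_isUnit_det P).mp hP)]
  exact ⟨mul_mul_inv_mem_orthogonalGroup hP hinvariant, by simp [hfix]⟩
end

section
/- Let f : ℝⁿ → [0,∞) be measurable and define, on ℝᵏ × ℝ₊, ρ(x', s) to be the radius of the ball in ℝ^{n−k} with the same measure as E(x',s) = {v ∈ ℝ^{n−k} : f(x',v) > s}. If f ∈ L^p(ℝⁿ) for some 1 ≤ p < ∞, then ρ ∈ L¹_loc(ℝᵏ × ℝ₊); in particular almost every point of ℝᵏ × ℝ₊ is a Lebesgue point of ρ. -/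
/-!
Since `x ^ (1/m) ≤ 1 + x`, the radius is dominated by `1 + |E(x', s)| / |B(0, 1)|`. For
`s > a > 0` the fibre `E(x', s)` lies in `E(x', a)`, so by Tonelli
`∫_{ℝᵏ × (a, b]} |E(x', s)| ≤ (b - a) |{f > a}|`, which is finite by Chebyshev's inequality.
Hence the radius is integrable on `A × (a, b]` for every `A` of finite measure, which is local
integrability on `ℝᵏ × (0, ∞)`. On this open set it agrees near each point with an integrable
indicator function, to which the Lebesgue differentiation theorem applies.
-/

open MeasureTheory Set Filter Metric
open scoped ENNReal Topology

theorem Real.rpow_le_one_add {x t : ℝ} (hx : 0 ≤ x) (ht₀ : 0 ≤ t) (ht₁ : t ≤ 1) :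
    x ^ t ≤ 1 + x := by
  rcases le_total x 1 with h | h
  · linarith [Real.rpow_le_one hx h ht₀]
  · linarith [Real.rpow_le_self_of_one_le h ht₁]

namespace MeasureTheory

variable {α : Type*} [MeasurableSpace α] {μ : Measure α}

theorem IntegrableOn.rpow_of_le_one {s : Set α} {g : α → ℝ} (hg : IntegrableOn g s μ)
    (hs : μ s ≠ ∞) (hg₀ : ∀ x, 0 ≤ g x) {t : ℝ} (ht₀ : 0 ≤ t) (ht₁ : t ≤ 1) :
    IntegrableOn (fun x => g x ^ t) s μ := by
  refine Integrable.mono' ((integrableOn_const (C := (1 : ℝ)) hs).add hg)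
    (hg.aestronglyMeasurable.aemeasurable.pow_const t).aestronglyMeasurable
    (Eventually.of_forall fun x => ?_)
  rw [Real.norm_of_nonneg (Real.rpow_nonneg (hg₀ x) t)]
  exact Real.rpow_le_one_add (hg₀ x) ht₀ ht₁

theorem MemLp.measure_lt_lt_top {f : α → ℝ} {p : ℝ≥0∞} (hf : MemLp f p μ) (hp₀ : p ≠ 0)
    (hp : p ≠ ∞) {a : ℝ} (ha : 0 < a) : μ {x | a < f x} < ∞ := by
  refine (measure_mono fun x (hx : a < f x) => ?_).trans_lt
    (hf.meas_ge_lt_top hp₀ hp (ε := a.toNNReal) (by simpa using ha))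
  show a.toNNReal ≤ ‖f x‖₊
  rw [← NNReal.coe_le_coe, Real.coe_toNNReal _ ha.le, coe_nnnorm]
  exact hx.le.trans (Real.le_norm_self _)

end MeasureTheory

section FiberDistribution

variable {α β : Type*} [MeasurableSpace β] {ν : Measure β} {f : α × β → ℝ}

/-- The paper's `|E(x', s)|`. -/
def fiberDistribution (ν : Measure β) (f : α × β → ℝ) (q : α × ℝ) : ℝ≥0∞ :=
  ν {v | q.2 < f (q.1, v)}

theorem fiberDistribution_antitone (x : α) : Antitone fun s => fiberDistribution ν f (x, s) :=
  fun _ _ hst => measure_mono fun _ hv => hst.trans_lt hv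

variable [MeasurableSpace α] {μ : Measure α}

theorem measurable_fiberDistribution [SFinite ν] (hf : Measurable f) :
    Measurable (fiberDistribution ν f) :=
  measurable_measure_prodMk_left <| measurableSet_lt (measurable_snd.comp measurable_fst)
    (hf.comp ((measurable_fst.comp measurable_fst).prodMk measurable_snd))

theorem setLIntegral_fiberDistribution_le [SFinite μ] [SFinite ν] (hf : Measurable f)
    (s : Set α) (a b : ℝ) :
    ∫⁻ q in s ×ˢ Ioc a b, fiberDistribution ν f q ∂μ.prod volume ≤
      (μ.prod ν {x | a < f x}) * volume (Ioc a b) := by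
  have hfa : Measurable fun x => fiberDistribution ν f (x, a) :=
    (measurable_fiberDistribution hf).comp (measurable_id.prodMk measurable_const)
  calc ∫⁻ q in s ×ˢ Ioc a b, fiberDistribution ν f q ∂μ.prod volume
      ≤ ∫⁻ q in univ ×ˢ Ioc a b, fiberDistribution ν f q ∂μ.prod volume :=
        lintegral_mono_set (prod_mono (subset_univ s) le_rfl)
    _ ≤ ∫⁻ q in univ ×ˢ Ioc a b, fiberDistribution ν f (q.1, a) ∂μ.prod volume :=
        setLIntegral_mono (hfa.comp measurable_fst) fun q hq =>
          fiberDistribution_antitone q.1 hq.2.1.le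
    _ = ∫⁻ q, fiberDistribution ν f (q.1, a) * 1 ∂μ.prod (volume.restrict (Ioc a b)) := by
        rw [← Measure.prod_restrict, Measure.restrict_univ]
        simp only [mul_one]
    _ = (∫⁻ x, fiberDistribution ν f (x, a) ∂μ) * volume (Ioc a b) := by
        rw [lintegral_prod_mul hfa.aemeasurable aemeasurable_const]
        simp
    _ = (μ.prod ν {x | a < f x}) * volume (Ioc a b) := by
        rw [Measure.prod_apply (measurableSet_lt measurable_const hf)]
        rfl

theorem integrableOn_rpow_fiberDistribution [SFinite μ] [SFinite ν] (hf : Measurable f)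
    {p : ℝ≥0∞} (hfp : MemLp f p (μ.prod ν)) (hp₀ : p ≠ 0) (hp : p ≠ ∞) {s : Set α}
    (hs : μ s ≠ ∞) {a : ℝ} (ha : 0 < a) (b : ℝ) {c t : ℝ} (hc : 0 ≤ c) (ht₀ : 0 ≤ t)
    (ht₁ : t ≤ 1) :
    IntegrableOn (fun q => ((fiberDistribution ν f q).toReal / c) ^ t) (s ×ˢ Ioc a b)
      (μ.prod volume) := by
  have hF : IntegrableOn (fun q => (fiberDistribution ν f q).toReal) (s ×ˢ Ioc a b)
      (μ.prod volume) :=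
    integrable_toReal_of_lintegral_ne_top (measurable_fiberDistribution hf).aemeasurable <|
      ((setLIntegral_fiberDistribution_le hf s a b).trans_lt <|
        ENNReal.mul_lt_top (hfp.measure_lt_lt_top hp₀ hp ha) measure_Ioc_lt_top).ne
  refine IntegrableOn.rpow_of_le_one (hF.div_const c) ?_ (fun q => by positivity) ht₀ ht₁
  rw [Measure.prod_prod]
  exact ENNReal.mul_ne_top hs measure_Ioc_lt_top.ne

theorem locallyIntegrableOn_rpow_fiberDistribution [TopologicalSpace α]
    [IsLocallyFiniteMeasure μ] [SFinite μ] [SFinite ν] (hf : Measurable f)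
    {p : ℝ≥0∞} (hfp : MemLp f p (μ.prod ν)) (hp₀ : p ≠ 0) (hp : p ≠ ∞) {c t : ℝ} (hc : 0 ≤ c)
    (ht₀ : 0 ≤ t) (ht₁ : t ≤ 1) :
    LocallyIntegrableOn (fun q => ((fiberDistribution ν f q).toReal / c) ^ t)
      (univ ×ˢ Ioi 0) (μ.prod volume) := by
  rintro ⟨x, s⟩ ⟨-, hs : 0 < s⟩
  obtain ⟨u, hu, hμu⟩ := μ.finiteAt_nhds x
  refine ⟨u ×ˢ Ioc (s / 2) (s + 1), mem_nhdsWithin_of_mem_nhds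
    (prod_mem_nhds hu (Ioc_mem_nhds (by linarith) (by linarith))), ?_⟩
  exact integrableOn_rpow_fiberDistribution hf hfp hp₀ hp hμu.ne (half_pos hs) _ hc ht₀ ht₁

end FiberDistribution

theorem MeasureTheory.LocallyIntegrableOn.ae_tendsto_average_norm_sub {α E : Type*}
    [MetricSpace α] [MeasurableSpace α] [BorelSpace α] [SecondCountableTopology α]
    [HasBesicovitchCovering α] {μ : Measure α} [IsLocallyFiniteMeasure μ]
    [NormedAddCommGroup E] [NormedSpace ℝ E] {f : α → E} {U : Set α}
    (hf : LocallyIntegrableOn f U μ) (hU : IsOpen U) :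
    ∀ᵐ x ∂μ.restrict U,
      Tendsto (fun r => ⨍ y in closedBall x r, ‖f y - f x‖ ∂μ) (𝓝[>] 0) (𝓝 0) := by
  obtain ⟨T, hTc, hTo, hUT, hTi⟩ := hf.exists_countable_integrableOn
  have hLeb : ∀ u ∈ T, ∀ᵐ x ∂μ, Tendsto (fun r => ⨍ y in closedBall x r,
      ‖(u ∩ U).indicator f y - (u ∩ U).indicator f x‖ ∂μ) (𝓝[>] 0) (𝓝 0) := fun u hu =>
    ((Besicovitch.vitaliFamily μ).ae_tendsto_average_norm_sub
      ((hTi u hu).integrable_indicator ((hTo u hu).inter hU).measurableSet).locallyIntegrable).mono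
      fun x hx => hx.comp (Besicovitch.tendsto_filterAt μ x)
  rw [ae_restrict_iff' hU.measurableSet]
  filter_upwards [(ae_ball_iff hTc).2 hLeb] with x hx hxU
  obtain ⟨u, hu, hxu⟩ := mem_iUnion₂.1 (hUT hxU)
  obtain ⟨ε, hε, hball⟩ :=
    nhds_basis_closedBall.mem_iff.1 (((hTo u hu).inter hU).mem_nhds ⟨hxu, hxU⟩)
  refine (hx u hu).congr' ?_
  filter_upwards [Ioo_mem_nhdsGT hε] with r hr
  refine setAverage_congr_fun measurableSet_closedBall (Eventually.of_forall fun y hy => ?_)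
  have hyε : y ∈ u ∩ U := hball (closedBall_subset_closedBall hr.2.le hy)
  rw [indicator_of_mem hyε, indicator_of_mem (hball (mem_closedBall_self hε.le))]

theorem radius_locallyIntegrable_general {k m : ℕ}
    (f : EuclideanSpace ℝ (Fin k) × EuclideanSpace ℝ (Fin m) → ℝ)
    (hf_meas : Measurable f)
    (p : ℝ≥0∞) (hp1 : 1 ≤ p) (hp2 : p ≠ ⊤)
    (hf : MemLp f p volume) :
    MeasureTheory.LocallyIntegrableOn
      (fun q : EuclideanSpace ℝ (Fin k) × ℝ =>
        ((volume {v : EuclideanSpace ℝ (Fin m) | q.2 < f (q.1, v)}).toReal /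
            (volume (Metric.ball (0 : EuclideanSpace ℝ (Fin m)) 1)).toReal)
          ^ ((m : ℝ))⁻¹)
      (Set.univ ×ˢ Set.Ioi (0 : ℝ)) volume ∧
    ∀ᵐ q ∂(volume.restrict ((Set.univ : Set (EuclideanSpace ℝ (Fin k))) ×ˢ Set.Ioi (0 : ℝ))),
      Tendsto (fun r : ℝ =>
          ⨍ y in Metric.closedBall q r,
            |((volume {v : EuclideanSpace ℝ (Fin m) | y.2 < f (y.1, v)}).toReal /
                  (volume (Metric.ball (0 : EuclideanSpace ℝ (Fin m)) 1)).toReal)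
                ^ ((m : ℝ))⁻¹ -
              ((volume {v : EuclideanSpace ℝ (Fin m) | q.2 < f (q.1, v)}).toReal /
                  (volume (Metric.ball (0 : EuclideanSpace ℝ (Fin m)) 1)).toReal)
                ^ ((m : ℝ))⁻¹| ∂volume)
        (𝓝[>] 0) (𝓝 0) := by
  rw [Measure.volume_eq_prod] at hf
  have hloc : LocallyIntegrableOn (fun q => ((fiberDistribution volume f q).toReal /
      (volume (ball (0 : EuclideanSpace ℝ (Fin m)) 1)).toReal) ^ (m : ℝ)⁻¹)
      (univ ×ˢ Ioi 0) volume := by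
    rw [Measure.volume_eq_prod]
    exact locallyIntegrableOn_rpow_fiberDistribution hf_meas hf
      (zero_lt_one.trans_le hp1).ne' hp2 ENNReal.toReal_nonneg (by positivity)
      (Nat.cast_inv_le_one m)
  exact ⟨hloc, hloc.ae_tendsto_average_norm_sub (isOpen_univ.prod isOpen_Ioi)⟩

/-- For `f ∈ L^p(ℝⁿ)` nonnegative, the radius function
`ρ(x', s) = (|{v : f(x',v) > s}| / |B(0,1)|)^{1/(n−k)}` is locally integrable on
`ℝᵏ × (0, ∞)`; in particular almost every point of `ℝᵏ × (0,∞)` is a Lebesgue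
point of `ρ`. -/
theorem radius_locallyIntegrable {k m : ℕ} (hm : 1 ≤ m)
    (f : EuclideanSpace ℝ (Fin k) × EuclideanSpace ℝ (Fin m) → ℝ)
    (hf_meas : Measurable f) (hf_nonneg : ∀ x, 0 ≤ f x)
    (p : ℝ≥0∞) (hp1 : 1 ≤ p) (hp2 : p ≠ ⊤)
    (hf : MemLp f p volume) :
    MeasureTheory.LocallyIntegrableOn
      (fun q : EuclideanSpace ℝ (Fin k) × ℝ =>
        ((volume {v : EuclideanSpace ℝ (Fin m) | q.2 < f (q.1, v)}).toReal /
            (volume (Metric.ball (0 : EuclideanSpace ℝ (Fin m)) 1)).toReal)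
          ^ ((m : ℝ))⁻¹)
      (Set.univ ×ˢ Set.Ioi (0 : ℝ)) volume ∧
    ∀ᵐ q ∂(volume.restrict ((Set.univ : Set (EuclideanSpace ℝ (Fin k))) ×ˢ Set.Ioi (0 : ℝ))),
      Tendsto (fun r : ℝ =>
          ⨍ y in Metric.closedBall q r,
            |((volume {v : EuclideanSpace ℝ (Fin m) | y.2 < f (y.1, v)}).toReal /
                  (volume (Metric.ball (0 : EuclideanSpace ℝ (Fin m)) 1)).toReal)
                ^ ((m : ℝ))⁻¹ -
              ((volume {v : EuclideanSpace ℝ (Fin m) | q.2 < f (q.1, v)}).toReal /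
                  (volume (Metric.ball (0 : EuclideanSpace ℝ (Fin m)) 1)).toReal)
                ^ ((m : ℝ))⁻¹| ∂volume)
        (𝓝[>] 0) (𝓝 0) :=
  radius_locallyIntegrable_general f hf_meas p hp1 hp2 hf
end
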